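/- arXiv:1510.08912 — 4 statements merged into one kernel-verified Lean document; each statement's English description precedes it below -/
import Mathlib

section
/- Let F be a field of characteristic 2. Then the associative algebra M_2(F) of 2×2 matrices over F is Lie center-by-metabelian; that is, for all a, b, c, d, e in M_2(F), the Lie bracket [[[a,b],[c,d]], e] = 0, where [x,y] = xy - yx. -/
/-!
Commutators have trace zero, and in characteristic 2 a traceless `2 × 2` matrix has equal
diagonal entries. A direct computation shows that the commutator of two such matrices is a
scalar matrix, hence central; so every `[[a, b], [c, d]]` commutes with every `e`.
-/

namespace Matrix

variable {R : Type*} [CommRing R] [CharP R 2]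

theorem lie_eq_smul_one_of_trace_eq_zero {x y : Matrix (Fin 2) (Fin 2) R}
    (hx : x.trace = 0) (hy : y.trace = 0) :
    ⁅x, y⁆ = (x 0 1 * y 1 0 - y 0 1 * x 1 0) • (1 : Matrix (Fin 2) (Fin 2) R) := by
  rw [trace_fin_two, add_eq_zero_iff_eq_neg', CharTwo.neg_eq] at hx hy
  ext i j
  fin_cases i <;> fin_cases j <;>
    simp only [Fin.zero_eta, Fin.mk_one, Fin.isValue, Ring.lie_def, sub_apply, smul_apply,
      smul_eq_mul, mul_apply, Fin.sum_univ_two, one_apply_eq, one_apply_ne zero_ne_one,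
      one_apply_ne one_ne_zero, mul_one, mul_zero, hx, hy] <;>
    grind

theorem lie_lie_lie_eq_zero (a b c d e : Matrix (Fin 2) (Fin 2) R) :
    ⁅⁅⁅a, b⁆, ⁅c, d⁆⁆, e⁆ = 0 := by
  rw [lie_eq_smul_one_of_trace_eq_zero (LieAlgebra.matrix_trace_commutator_zero _ _ a b)
    (LieAlgebra.matrix_trace_commutator_zero _ _ c d), Ring.lie_def, smul_one_mul, mul_smul_one,
    sub_self]

end Matrix

/-- Over a field of characteristic 2, the algebra `M₂(F)` is Lie
center-by-metabelian: `[[[a,b],[c,d]],e] = 0` where `[x,y] = xy - yx`. -/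
theorem m2_lie_center_by_metabelian (F : Type*) [Field F] [CharP F 2]
    (a b c d e : Matrix (Fin 2) (Fin 2) F) :
    ((a * b - b * a) * (c * d - d * c) - (c * d - d * c) * (a * b - b * a)) * e -
      e * ((a * b - b * a) * (c * d - d * c) - (c * d - d * c) * (a * b - b * a)) = 0 := by
  simpa only [Ring.lie_def] using Matrix.lie_lie_lie_eq_zero a b c d e
end

section
/- Let F be a field of characteristic 2. Then the associative algebra M_2(F) of 2×2 matrices over F is Lie solvable: the Lie derived series δ^[0](A) = A, δ^[n+1](A) = [δ^[n](A), δ^[n](A)] (linear span of brackets) eventually vanishes. -/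
/-!
Commutators are traceless, so `δ¹(M₂(F)) ⊆ 𝔰𝔩₂(F)`. In characteristic 2 the commutator of two
traceless `2 × 2` matrices is scalar (its off-diagonal entries are multiples of `2`), so
`δ²(M₂(F)) ⊆ F · 1`, which is commutative; hence `δ³(M₂(F)) = 0`.
-/

/-- The Lie derived series of an associative algebra `A` over a field `F`:
`δ⁰(A) = A`, `δⁿ⁺¹(A)` is the linear span of all `xy - yx` with `x, y ∈ δⁿ(A)`. -/
def lieDerivedSeries (F A : Type*) [Field F] [Ring A] [Algebra F A] : ℕ → Submodule F A
  | 0 => ⊤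
  | n + 1 => Submodule.span F
      {z : A | ∃ x ∈ lieDerivedSeries F A n, ∃ y ∈ lieDerivedSeries F A n, z = x * y - y * x}

section
variable {F A : Type*} [Field F] [Ring A] [Algebra F A]

theorem lieDerivedSeries_succ_le {n : ℕ} {S T : Submodule F A} (hS : lieDerivedSeries F A n ≤ S)
    (hT : ∀ x ∈ S, ∀ y ∈ S, x * y - y * x ∈ T) : lieDerivedSeries F A (n + 1) ≤ T := by
  rw [lieDerivedSeries, Submodule.span_le]
  rintro z ⟨x, hx, y, hy, rfl⟩
  exact hT x (hS hx) y (hS hy)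

theorem commutator_eq_zero_of_mem_span_one {x y : A} (hx : x ∈ Submodule.span F {1})
    (hy : y ∈ Submodule.span F {1}) : x * y - y * x = 0 := by
  obtain ⟨a, rfl⟩ := Submodule.mem_span_singleton.mp hx
  obtain ⟨b, rfl⟩ := Submodule.mem_span_singleton.mp hy
  simp [smul_smul, mul_comm]

end

theorem lieDerivedSeries_one_le_ker_trace (F n : Type*) [Field F] [Fintype n] [DecidableEq n] :
    lieDerivedSeries F (Matrix n n F) 1 ≤ LinearMap.ker (Matrix.traceLinearMap n F F) := by
  simpa using lieDerivedSeries_succ_le (n := 0) le_rfl fun x _ y _ => by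
    simp [Matrix.trace_mul_comm x y]

theorem Matrix.commutator_eq_smul_one_of_trace_eq_zero {R : Type*} [CommRing R] [CharP R 2]
    {x y : Matrix (Fin 2) (Fin 2) R} (hx : x.trace = 0) (hy : y.trace = 0) :
    x * y - y * x = (x 0 1 * y 1 0 - x 1 0 * y 0 1) • 1 := by
  have two : (2 : R) = 0 := CharTwo.two_eq_zero
  rw [Matrix.trace_fin_two] at hx hy
  ext i j
  fin_cases i <;> fin_cases j <;>
    simp only [Fin.zero_eta, Fin.mk_one, Fin.isValue, sub_apply, mul_apply, Fin.sum_univ_two,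
      smul_apply, one_apply_eq, one_apply_ne, ne_eq, zero_ne_one, one_ne_zero, not_false_eq_true,
      smul_eq_mul, mul_one, mul_zero]
  · ring
  · linear_combination x 0 1 * hy - y 0 1 * hx + (x 0 0 * y 0 1 - x 0 1 * y 0 0) * two
  · linear_combination y 1 0 * hx - x 1 0 * hy + (x 1 0 * y 0 0 - x 0 0 * y 1 0) * two
  · linear_combination (x 1 0 * y 0 1 - x 0 1 * y 1 0) * two

/-- Over a field of characteristic 2, the algebra `M₂(F)` is Lie solvable:
its Lie derived series eventually vanishes. -/
theorem m2_lie_solvable (F : Type*) [Field F] [CharP F 2] :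
    ∃ n : ℕ, lieDerivedSeries F (Matrix (Fin 2) (Fin 2) F) n = ⊥ := by
  have hδ₂_scalar : lieDerivedSeries F (Matrix (Fin 2) (Fin 2) F) 2 ≤ Submodule.span F {1} :=
    lieDerivedSeries_succ_le (lieDerivedSeries_one_le_ker_trace F (Fin 2)) fun x hx y hy => by
      rw [Matrix.commutator_eq_smul_one_of_trace_eq_zero hx hy]
      exact Submodule.smul_mem _ _ (Submodule.mem_span_singleton_self _)
  exact ⟨3, le_bot_iff.mp (lieDerivedSeries_succ_le hδ₂_scalar fun x hx y hy =>
    (Submodule.mem_bot F).mpr (commutator_eq_zero_of_mem_span_one hx hy))⟩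
end

section
/- Let L be a nilpotent restricted Lie algebra over a field of characteristic p > 0 such that the restricted subalgebra L'_p generated by the derived subalgebra [L,L] is p-nilpotent. Then the set I of p-nilpotent elements of L is a subspace of L (in fact a restricted ideal containing L'_p). -/
/-- A (restricted) `p`-operation on a Lie algebra `L` over a field of characteristic
`p`: a map `x ↦ x^{[p]}` that is `p`-semilinear, satisfies `ad (x^{[p]}) = (ad x)^p`,
and deviates from additivity only by a sum of Lie brackets (Jacobson's formula). -/
class RestrictedLieAlgebra (p : ℕ) (F L : Type*) [Field F] [LieRing L] [LieAlgebra F L] where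
  pPow : L → L
  smul_pPow : ∀ (c : F) (x : L), pPow (c • x) = c ^ p • pPow x
  ad_pPow : ∀ x y : L, ⁅pPow x, y⁆ = ((LieAlgebra.ad F L x) ^ p) y
  add_pPow_mem : ∀ x y : L,
    pPow (x + y) - pPow x - pPow y ∈ Submodule.span F {z : L | ∃ a b : L, z = ⁅a, b⁆}

open RestrictedLieAlgebra

/-- A submodule of `L` is a restricted subalgebra if it is closed under the bracket and
under the `p`-map. -/
def IsRestrictedSubalgebra {p : ℕ} {F L : Type*} [Field F] [LieRing L] [LieAlgebra F L]
    [RestrictedLieAlgebra p F L] (S : Submodule F L) : Prop :=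
  (∀ x ∈ S, ∀ y ∈ S, ⁅x, y⁆ ∈ S) ∧ ∀ x ∈ S, pPow p F x ∈ S

/-- The restricted subalgebra generated by a subset `s` of `L`. -/
def restrictedClosure (p : ℕ) (F : Type*) {L : Type*} [Field F] [LieRing L] [LieAlgebra F L]
    [RestrictedLieAlgebra p F L] (s : Set L) : Submodule F L :=
  sInf {S : Submodule F L | s ⊆ S ∧ IsRestrictedSubalgebra (p := p) (F := F) S}

/-!
Jacobson's formula makes the `p`-map additive modulo `L'ₚ`, and since `L'ₚ` is closed under
the `p`-map this persists to all iterates: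
`(x + y)^{[p]^k} ≡ x^{[p]^k} + y^{[p]^k} mod L'ₚ`. If `x` and `y` are `p`-nilpotent, taking `k`
large kills the right-hand side, so `(x + y)^{[p]^k} ∈ L'ₚ`, and the `p`-nilpotency of `L'ₚ`
finishes. Brackets lie in `L'ₚ`, hence are `p`-nilpotent, which makes the resulting subspace an
ideal.
-/

namespace RestrictedLieAlgebra

variable {p : ℕ} {F L : Type*} [Field F] [LieRing L] [LieAlgebra F L]
  [RestrictedLieAlgebra p F L]

theorem pPow_zero (hp : p ≠ 0) : pPow p F (0 : L) = 0 := by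
  simpa [zero_pow hp] using smul_pPow (p := p) (L := L) (0 : F) 0

theorem iterate_pPow_smul (c : F) (x : L) (t : ℕ) :
    (pPow p F)^[t] (c • x) = c ^ p ^ t • (pPow p F)^[t] x := by
  induction t with
  | zero => simp
  | succ t ih =>
    rw [Function.iterate_succ_apply', ih, smul_pPow, Function.iterate_succ_apply', ← pow_mul,
      pow_succ]

theorem iterate_pPow_eq_zero_of_le (hp : p ≠ 0) {x : L} {t s : ℕ}
    (h : (pPow p F)^[t] x = 0) (hts : t ≤ s) : (pPow p F)^[s] x = 0 := by
  obtain ⟨d, rfl⟩ := Nat.exists_eq_add_of_le hts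
  rw [Nat.add_comm, Function.iterate_add_apply, h, Function.iterate_fixed (pPow_zero hp)]

theorem span_le_restrictedClosure (s : Set L) :
    Submodule.span F s ≤ restrictedClosure p F s :=
  le_sInf fun _ hS => Submodule.span_le.mpr hS.1

theorem pPow_mem_restrictedClosure {s : Set L} {x : L} (hx : x ∈ restrictedClosure p F s) :
    pPow p F x ∈ restrictedClosure p F s := by
  rw [restrictedClosure, Submodule.mem_sInf] at hx ⊢
  exact fun S hS => hS.2.2 x (hx S hS)

theorem pPow_sub_sub_mem_of_sub_sub_mem {u v w : L}
    (h : w - u - v ∈ restrictedClosure p F {z : L | ∃ a b : L, z = ⁅a, b⁆}) :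
    pPow p F w - pPow p F u - pPow p F v ∈
      restrictedClosure p F {z : L | ∃ a b : L, z = ⁅a, b⁆} := by
  set C := restrictedClosure p F {z : L | ∃ a b : L, z = ⁅a, b⁆}
  set c := w - u - v
  have hw : w = (u + v) + c := by simp only [c]; abel
  have hsplit : pPow p F w - pPow p F u - pPow p F v =
      (pPow p F ((u + v) + c) - pPow p F (u + v) - pPow p F c) + pPow p F c +
        (pPow p F (u + v) - pPow p F u - pPow p F v) := by
    rw [← hw]; abel
  rw [hsplit]
  exact C.add_mem (C.add_mem (span_le_restrictedClosure _ (add_pPow_mem _ _))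
    (pPow_mem_restrictedClosure h)) (span_le_restrictedClosure _ (add_pPow_mem _ _))

theorem iterate_pPow_add_sub_sub_mem (x y : L) (k : ℕ) :
    (pPow p F)^[k] (x + y) - (pPow p F)^[k] x - (pPow p F)^[k] y ∈
      restrictedClosure p F {z : L | ∃ a b : L, z = ⁅a, b⁆} := by
  induction k with
  | zero => simp
  | succ k ih =>
    simp only [Function.iterate_succ_apply']
    exact pPow_sub_sub_mem_of_sub_sub_mem ih

theorem iterate_pPow_add_eq_zero (hp : p ≠ 0) {n : ℕ}
    (hn : ∀ x ∈ restrictedClosure p F {z : L | ∃ a b : L, z = ⁅a, b⁆},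
      (pPow p F)^[n] x = 0)
    {x y : L} {s t : ℕ} (hx : (pPow p F)^[s] x = 0) (hy : (pPow p F)^[t] y = 0) :
    (pPow p F)^[n + max s t] (x + y) = 0 := by
  have hmem := iterate_pPow_add_sub_sub_mem (p := p) (F := F) x y (max s t)
  rw [iterate_pPow_eq_zero_of_le hp hx (le_max_left s t),
    iterate_pPow_eq_zero_of_le hp hy (le_max_right s t), sub_zero, sub_zero] at hmem
  rw [Function.iterate_add_apply, hn _ hmem]

variable (p F L) in
def pNilpotentSubmodule (hp : p ≠ 0) {n : ℕ}
    (hn : ∀ x ∈ restrictedClosure p F {z : L | ∃ a b : L, z = ⁅a, b⁆},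
      (pPow p F)^[n] x = 0) :
    Submodule F L where
  carrier := {x : L | ∃ t : ℕ, (pPow p F)^[t] x = 0}
  zero_mem' := ⟨0, rfl⟩
  add_mem' := fun ⟨_, hx⟩ ⟨_, hy⟩ => ⟨_, iterate_pPow_add_eq_zero hp hn hx hy⟩
  smul_mem' c _ := fun ⟨t, hx⟩ => ⟨t, by rw [iterate_pPow_smul, hx, smul_zero]⟩

end RestrictedLieAlgebra

theorem pNilpotent_elements_form_subspace_general (p : ℕ) [Fact p.Prime] (F L : Type*) [Field F]
    [LieRing L] [LieAlgebra F L] [RestrictedLieAlgebra p F L]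
    (hnil : ∃ n : ℕ, ∀ x ∈ restrictedClosure p F {z : L | ∃ a b : L, z = ⁅a, b⁆},
      (pPow p F)^[n] x = 0) :
    ∃ I : Submodule F L,
      (I : Set L) = {x : L | ∃ t : ℕ, (pPow p F)^[t] x = 0} ∧
      (∀ x ∈ I, ∀ y : L, ⁅y, x⁆ ∈ I) ∧
      (∀ x ∈ I, pPow p F x ∈ I) ∧
      restrictedClosure p F {z : L | ∃ a b : L, z = ⁅a, b⁆} ≤ I := by
  obtain ⟨n, hn⟩ := hnil
  have hp : p ≠ 0 := (Fact.out : p.Prime).ne_zero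
  refine ⟨pNilpotentSubmodule p F L hp hn, rfl, ?_, ?_, fun x hx => ⟨n, hn x hx⟩⟩
  · intro x _ y
    exact ⟨n, hn _ (span_le_restrictedClosure _ (Submodule.subset_span ⟨y, x, rfl⟩))⟩
  · rintro x ⟨t, hx⟩
    refine ⟨t, ?_⟩
    rw [← Function.iterate_succ_apply, Function.iterate_succ_apply', hx, pPow_zero hp]

/-- if `L` is a nilpotent restricted Lie algebra over a field of
characteristic `p > 0` whose restricted subalgebra `L'ₚ` generated by `[L,L]` is
`p`-nilpotent, then the set of `p`-nilpotent elements of `L` is a subspace of `L`;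
in fact it is a restricted ideal containing `L'ₚ`. -/
theorem pNilpotent_elements_form_subspace (p : ℕ) [Fact p.Prime] (F L : Type*) [Field F]
    [CharP F p] [LieRing L] [LieAlgebra F L] [RestrictedLieAlgebra p F L]
    [LieModule.IsNilpotent L L]
    (hnil : ∃ n : ℕ, ∀ x ∈ restrictedClosure p F {z : L | ∃ a b : L, z = ⁅a, b⁆},
      (pPow p F)^[n] x = 0) :
    ∃ I : Submodule F L,
      (I : Set L) = {x : L | ∃ t : ℕ, (pPow p F)^[t] x = 0} ∧
      (∀ x ∈ I, ∀ y : L, ⁅y, x⁆ ∈ I) ∧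
      (∀ x ∈ I, pPow p F x ∈ I) ∧
      restrictedClosure p F {z : L | ∃ a b : L, z = ⁅a, b⁆} ≤ I :=
  pNilpotent_elements_form_subspace_general p F L hnil
end

section
/- Let L be the restricted Lie algebra over a field F of characteristic 2 with basis {x, y, z} and relations [x,y] = z, [x,z] = [y,z] = 0, x^{[2]} = y^{[2]} = 0, z^{[2]} = z. Then the restricted enveloping algebra u(L) is Lie center-by-metabelian but not Lie metabelian: [[[a,b],[c,d]], e] = 0 for all a,b,c,d,e ∈ u(L), yet there exist a,b,c,d ∈ u(L) with [[a,b],[c,d]] ≠ 0. -/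
/-!
`z` is a central idempotent, and modulo `z` the generators commute, so every commutator of
`u(L)` lies in the corner `z u(L)`. In characteristic 2 the assignment `x ↦ e₁₂`, `y ↦ e₂₁`,
`z ↦ 1` defines `toMatrix : u(L) → M₂(F)`, and `ofMatrix` (sending the matrix units to
`zxy, zx, zy, zyx`) inverts it on the corner: `ofMatrix (toMatrix w) = z w`.
In `M₂(F)`, characteristic 2, commutators are traceless and the commutator of two traceless
matrices is scalar, so `[[a,b],[c,d]]` maps to a central matrix. Hence `[[[a,b],[c,d]],e]`
lies in the corner and maps to `0`, so it vanishes. On the other hand `[[x, xy], [y, xy]]`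
maps to the identity matrix.
-/

open FreeAlgebra

/-- The defining relations of `u(L)` for the restricted Lie algebra `L` over a field `F`
of characteristic 2 with basis `{x, y, z}`, `[x,y] = z`, `[x,z] = [y,z] = 0`,
`x^{[2]} = y^{[2]} = 0`, `z^{[2]} = z`. Here `x = ι 0`, `y = ι 1`, `z = ι 2`. -/
inductive uRel (F : Type*) [Field F] :
    FreeAlgebra F (Fin 3) → FreeAlgebra F (Fin 3) → Prop
  | commxy : uRel F (ι F (0 : Fin 3) * ι F (1 : Fin 3) - ι F (1 : Fin 3) * ι F (0 : Fin 3))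
      (ι F (2 : Fin 3))
  | commxz : uRel F (ι F (0 : Fin 3) * ι F (2 : Fin 3) - ι F (2 : Fin 3) * ι F (0 : Fin 3)) 0
  | commyz : uRel F (ι F (1 : Fin 3) * ι F (2 : Fin 3) - ι F (2 : Fin 3) * ι F (1 : Fin 3)) 0
  | xsq : uRel F (ι F (0 : Fin 3) * ι F (0 : Fin 3)) 0
  | ysq : uRel F (ι F (1 : Fin 3) * ι F (1 : Fin 3)) 0
  | zsq : uRel F (ι F (2 : Fin 3) * ι F (2 : Fin 3)) (ι F (2 : Fin 3))

/-- The restricted enveloping algebra `u(L)` of the above `L`. -/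
def uL (F : Type*) [Field F] : Type _ := RingQuot (uRel F)

instance (F : Type*) [Field F] : Ring (uL F) := inferInstanceAs (Ring (RingQuot (uRel F)))

namespace Matrix

variable {R : Type*} [CommRing R] [CharP R 2]

theorem commutator_eq_smul_one_of_trace_eq_zero_s17 {P Q : Matrix (Fin 2) (Fin 2) R}
    (hP : P.trace = 0) (hQ : Q.trace = 0) :
    P * Q - Q * P = (P 0 1 * Q 1 0 - Q 0 1 * P 1 0) • 1 := by
  rw [trace_fin_two, CharTwo.add_eq_zero] at hP hQ
  ext i j
  fin_cases i <;> fin_cases j <;>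
    simp [mul_apply, Fin.sum_univ_two, hP, hQ, CharTwo.sub_eq_add] <;> ring_nf <;>
    simp [CharTwo.two_eq_zero]

theorem commute_commutator_commutator_fin_two (A B C D E : Matrix (Fin 2) (Fin 2) R) :
    Commute ((A * B - B * A) * (C * D - D * C) - (C * D - D * C) * (A * B - B * A)) E := by
  have htr (P Q : Matrix (Fin 2) (Fin 2) R) : (P * Q - Q * P).trace = 0 := by
    rw [trace_sub, trace_mul_comm, sub_self]
  rw [commutator_eq_smul_one_of_trace_eq_zero_s17 (htr A B) (htr C D)]
  exact (Commute.one_left E).smul_left _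

end Matrix

namespace uL

variable (F : Type*) [Field F]

instance : Algebra F (uL F) := inferInstanceAs (Algebra F (RingQuot (uRel F)))

def mk : FreeAlgebra F (Fin 3) →ₐ[F] uL F := RingQuot.mkAlgHom F (uRel F)

theorem mk_surjective : Function.Surjective (mk F) := RingQuot.mkAlgHom_surjective F (uRel F)

variable {F} in
theorem mk_eq_mk_of_rel {a b : FreeAlgebra F (Fin 3)} (h : uRel F a b) : mk F a = mk F b :=
  RingQuot.mkAlgHom_rel F h

def X : uL F := mk F (ι F 0)
def Y : uL F := mk F (ι F 1)
def Z : uL F := mk F (ι F 2)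

theorem X_mul_Y_sub_Y_mul_X : X F * Y F - Y F * X F = Z F := by
  simpa only [map_sub, map_mul, X, Y, Z] using mk_eq_mk_of_rel (uRel.commxy (F := F))

theorem X_mul_Z : X F * Z F = Z F * X F := by
  simpa only [map_sub, map_mul, map_zero, sub_eq_zero, X, Z] using
    mk_eq_mk_of_rel (uRel.commxz (F := F))

theorem Y_mul_Z : Y F * Z F = Z F * Y F := by
  simpa only [map_sub, map_mul, map_zero, sub_eq_zero, Y, Z] using
    mk_eq_mk_of_rel (uRel.commyz (F := F))

theorem X_mul_X : X F * X F = 0 := by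
  simpa only [map_mul, map_zero, X] using mk_eq_mk_of_rel (uRel.xsq (F := F))

theorem Y_mul_Y : Y F * Y F = 0 := by
  simpa only [map_mul, map_zero, Y] using mk_eq_mk_of_rel (uRel.ysq (F := F))

theorem Z_mul_Z : Z F * Z F = Z F := by
  simpa only [map_mul, Z] using mk_eq_mk_of_rel (uRel.zsq (F := F))

theorem adjoin_XYZ : Algebra.adjoin F {X F, Y F, Z F} = ⊤ := by
  have hgen : ({X F, Y F, Z F} : Set (uL F)) = mk F '' Set.range (ι F) := by
    rw [← Set.range_comp]
    ext u
    simp [Fin.exists_fin_succ, X, Y, Z, eq_comm]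
  rw [hgen, Algebra.adjoin_image, FreeAlgebra.adjoin_range_ι, Algebra.map_top,
    AlgHom.range_eq_top]
  exact mk_surjective F

theorem mem_adjoin_XYZ (u : uL F) : u ∈ Algebra.adjoin F {X F, Y F, Z F} :=
  adjoin_XYZ F ▸ Algebra.mem_top

variable {F} in
theorem commute_of_commute_XYZ {w : uL F} (hX : Commute w (X F)) (hY : Commute w (Y F))
    (hZ : Commute w (Z F)) (b : uL F) : Commute w b := by
  have hw : w ∈ Subalgebra.centralizer F {X F, Y F, Z F} := by
    simp only [Subalgebra.mem_centralizer_iff, Set.mem_insert_iff, Set.mem_singleton_iff]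
    rintro g (rfl | rfl | rfl)
    exacts [hX.eq.symm, hY.eq.symm, hZ.eq.symm]
  have hb : b ∈ Algebra.adjoin F {X F, Y F, Z F} := mem_adjoin_XYZ F _
  exact Algebra.adjoin_le_centralizer_centralizer F _ hb w hw

theorem Z_commute (b : uL F) : Commute (Z F) b :=
  commute_of_commute_XYZ (X_mul_Z F).symm (Y_mul_Z F).symm (Commute.refl _) b

theorem one_sub_Z_commute (b : uL F) : Commute (1 - Z F) b :=
  (Commute.one_left b).sub_left (Z_commute F b)

theorem one_sub_Z_mul_Z : (1 - Z F) * Z F = 0 := by rw [sub_mul, one_mul, Z_mul_Z, sub_self]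

theorem one_sub_Z_mul_one_sub_Z : (1 - Z F) * (1 - Z F) = 1 - Z F := by
  rw [mul_sub, mul_one, one_sub_Z_mul_Z, sub_zero]

variable {F} in
theorem commute_one_sub_Z_mul_of_commutator_eq_Z_mul {g h : uL F} (c : uL F)
    (hgh : g * h - h * g = Z F * c) : Commute ((1 - Z F) * g) h := by
  have e : (1 - Z F) * g * h - h * ((1 - Z F) * g) = (1 - Z F) * (g * h - h * g) := by
    rw [← mul_assoc h, ← (one_sub_Z_commute F h).eq]; noncomm_ring
  rw [commute_iff_eq, ← sub_eq_zero, e, hgh, ← mul_assoc, one_sub_Z_mul_Z, zero_mul]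

theorem one_sub_Z_mul_commute (a b : uL F) : Commute ((1 - Z F) * a) b := by
  have ha : a ∈ Algebra.adjoin F {X F, Y F, Z F} := mem_adjoin_XYZ F _
  induction ha using Algebra.adjoin_induction generalizing b with
  | mem g hg =>
    revert b
    apply commute_of_commute_XYZ <;> rcases hg with rfl | rfl | rfl
    · exact (one_sub_Z_commute F _).mul_left (Commute.refl _)
    · exact commute_one_sub_Z_mul_of_commutator_eq_Z_mul (-1) (by
        rw [mul_neg_one, ← X_mul_Y_sub_Y_mul_X, neg_sub])
    · rw [one_sub_Z_mul_Z]; exact Commute.zero_left _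
    · exact commute_one_sub_Z_mul_of_commutator_eq_Z_mul 1 (by rw [mul_one, X_mul_Y_sub_Y_mul_X])
    · exact (one_sub_Z_commute F _).mul_left (Commute.refl _)
    · rw [one_sub_Z_mul_Z]; exact Commute.zero_left _
    all_goals exact (Z_commute F _).symm
  | algebraMap r => exact (one_sub_Z_commute F b).mul_left (Algebra.commute_algebraMap_left r b)
  | add a₁ a₂ _ _ h₁ h₂ => rw [mul_add]; exact (h₁ b).add_left (h₂ b)
  | mul a₁ a₂ _ _ h₁ h₂ =>
    rw [show (1 - Z F) * (a₁ * a₂) = (1 - Z F) * a₁ * ((1 - Z F) * a₂) by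
      rw [(one_sub_Z_commute F a₁).symm.mul_mul_mul_comm, one_sub_Z_mul_one_sub_Z]]
    exact (h₁ b).mul_left (h₂ b)

theorem commutator_eq_Z_mul (a b : uL F) : a * b - b * a = Z F * (a * b - b * a) := by
  have h := (one_sub_Z_mul_commute F a b).eq
  rw [← sub_eq_zero, ← one_sub_mul, mul_sub, ← mul_assoc, h, ← mul_assoc, ← mul_assoc,
    (one_sub_Z_commute F b).eq, sub_self]

def ofMatrix : Matrix (Fin 2) (Fin 2) F →ₗ[F] uL F where
  toFun M := Z F * (M 0 0 • (X F * Y F) + M 0 1 • X F + M 1 0 • Y F + M 1 1 • (Y F * X F))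
  map_add' M N := by simp only [Matrix.add_apply, add_smul, ← mul_add]; congr 1; abel
  map_smul' c M := by
    simp only [Matrix.smul_apply, smul_eq_mul, mul_smul, ← smul_add, mul_smul_comm]; rfl

theorem ofMatrix_apply (M : Matrix (Fin 2) (Fin 2) F) : ofMatrix F M =
    Z F * (M 0 0 • (X F * Y F) + M 0 1 • X F + M 1 0 • Y F + M 1 1 • (Y F * X F)) := rfl

section CharTwo

variable [CharP F 2]

def generatorMatrix : Fin 3 → Matrix (Fin 2) (Fin 2) F := ![!![0, 1; 0, 0], !![0, 0; 1, 0], 1]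

theorem lift_generatorMatrix_eq_of_uRel ⦃a b : FreeAlgebra F (Fin 3)⦄ (h : uRel F a b) :
    FreeAlgebra.lift F (generatorMatrix F) a = FreeAlgebra.lift F (generatorMatrix F) b := by
  cases h <;> ext i j <;> fin_cases i <;> fin_cases j <;>
    simp [generatorMatrix, Matrix.one_fin_two, CharTwo.neg_eq]

def toMatrix : uL F →ₐ[F] Matrix (Fin 2) (Fin 2) F :=
  RingQuot.liftAlgHom F
    ⟨FreeAlgebra.lift F (generatorMatrix F), lift_generatorMatrix_eq_of_uRel F⟩

theorem toMatrix_mk (a : FreeAlgebra F (Fin 3)) :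
    toMatrix F (mk F a) = FreeAlgebra.lift F (generatorMatrix F) a :=
  RingQuot.liftAlgHom_mkAlgHom_apply F _ (lift_generatorMatrix_eq_of_uRel F) a

theorem toMatrix_X : toMatrix F (X F) = !![0, 1; 0, 0] := by
  rw [X, toMatrix_mk, FreeAlgebra.lift_ι_apply]; rfl

theorem toMatrix_Y : toMatrix F (Y F) = !![0, 0; 1, 0] := by
  rw [Y, toMatrix_mk, FreeAlgebra.lift_ι_apply]; rfl

theorem toMatrix_Z : toMatrix F (Z F) = 1 := by
  rw [Z, toMatrix_mk, FreeAlgebra.lift_ι_apply]; rfl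

instance : Nontrivial (uL F) := (toMatrix F).toRingHom.domain_nontrivial

instance : CharP (uL F) 2 := charP_of_injective_algebraMap (algebraMap F (uL F)).injective 2

theorem Y_mul_X : Y F * X F = X F * Y F + Z F := by
  rw [← sub_eq_iff_eq_add', ← neg_sub, X_mul_Y_sub_Y_mul_X, CharTwo.neg_eq]

theorem Z_mul_X_mul_Y_mul_X : Z F * X F * Y F * X F = Z F * X F := by
  calc Z F * X F * Y F * X F = Z F * (X F * X F * Y F + X F * Z F) := by
        rw [mul_assoc _ (Y F), Y_mul_X]; noncomm_ring
    _ = Z F * X F := by rw [X_mul_X, zero_mul, zero_add, X_mul_Z, ← mul_assoc, Z_mul_Z]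

theorem Z_mul_Y_mul_X_mul_Y : Z F * Y F * X F * Y F = Z F * Y F := by
  calc Z F * Y F * X F * Y F = Z F * (X F * Y F * Y F + Z F * Y F) := by
        rw [mul_assoc (Z F), Y_mul_X]; noncomm_ring
    _ = Z F * Y F := by rw [mul_assoc (X F), Y_mul_Y, mul_zero, zero_add, ← mul_assoc, Z_mul_Z]

theorem ofMatrix_one : ofMatrix F 1 = Z F := by
  simp [ofMatrix_apply, Y_mul_X, ← add_assoc, CharTwo.add_self_eq_zero, Z_mul_Z]

theorem ofMatrix_toMatrix_mul (a : uL F) (M : Matrix (Fin 2) (Fin 2) F) :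
    ofMatrix F (toMatrix F a * M) = a * ofMatrix F M := by
  have ha : a ∈ Algebra.adjoin F {X F, Y F, Z F} := mem_adjoin_XYZ F _
  induction ha using Algebra.adjoin_induction generalizing M with
  | mem g hg =>
    rcases hg with rfl | rfl | rfl
    · simp [toMatrix_X, ofMatrix_apply, Matrix.vecMul, dotProduct, Fin.sum_univ_two, mul_add,
        (Z_commute F (X F)).symm.left_comm, ← mul_assoc, X_mul_X, Z_mul_X_mul_Y_mul_X]
    · simp [toMatrix_Y, ofMatrix_apply, Matrix.vecMul, dotProduct, Fin.sum_univ_two, mul_add,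
        (Z_commute F (Y F)).symm.left_comm, ← mul_assoc, Y_mul_Y, Z_mul_Y_mul_X_mul_Y]
    · rw [toMatrix_Z, one_mul, ofMatrix_apply, ← mul_assoc, Z_mul_Z]
  | algebraMap r =>
    rw [AlgHom.commutes, Algebra.algebraMap_eq_smul_one, smul_mul_assoc, one_mul, map_smul,
      Algebra.smul_def]
  | add a₁ a₂ _ _ h₁ h₂ => rw [map_add, add_mul, map_add, h₁, h₂, add_mul]
  | mul a₁ a₂ _ _ h₁ h₂ => rw [map_mul (toMatrix F), mul_assoc, h₁, h₂, mul_assoc]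

theorem ofMatrix_toMatrix (w : uL F) : ofMatrix F (toMatrix F w) = Z F * w := by
  rw [← mul_one (toMatrix F w), ofMatrix_toMatrix_mul, ofMatrix_one, (Z_commute F w).eq]

end CharTwo

end uL

/-- for `F` of characteristic 2, `u(L)` is Lie center-by-metabelian but
not Lie metabelian: `[[[a,b],[c,d]],e] = 0` always, yet some `[[a,b],[c,d]] ≠ 0`. -/
theorem uL_center_by_metabelian_not_metabelian (F : Type*) [Field F] [CharP F 2] :
    (∀ a b c d e : uL F,
      ((a * b - b * a) * (c * d - d * c) - (c * d - d * c) * (a * b - b * a)) * e -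
        e * ((a * b - b * a) * (c * d - d * c) - (c * d - d * c) * (a * b - b * a)) = 0) ∧
    (∃ a b c d : uL F,
      (a * b - b * a) * (c * d - d * c) - (c * d - d * c) * (a * b - b * a) ≠ 0) := by
  open uL in
  constructor
  · intro a b c d e
    set W := (a * b - b * a) * (c * d - d * c) - (c * d - d * c) * (a * b - b * a)
    have hW : toMatrix F (W * e - e * W) = 0 := by
      simp only [W, map_sub, map_mul]
      exact sub_eq_zero.mpr (Matrix.commute_commutator_commutator_fin_two ..).eq
    rw [commutator_eq_Z_mul, ← ofMatrix_toMatrix, hW, map_zero]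
  · refine ⟨X F, X F * Y F, Y F, X F * Y F, fun h => ?_⟩
    have h00 := congrArg (fun w => toMatrix F w 0 0) h
    simp [toMatrix_X, toMatrix_Y] at h00
end
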